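/- arXiv:2501.18430 — 3 statements merged into one kernel-verified Lean document; each statement's English description precedes it below -/
import Mathlib

section
/- Let α : [0,1] → ℝ be continuous with α(x) > α(0) for all x ∈ (0,1], and suppose that the function x ↦ 1/(α(x) − α(0)) is integrable on [0,1] with ∫₀¹ dx/(α(x) − α(0)) > 1. Then there exists a unique λ > −α(0) such that ∫₀¹ dx/(λ + α(x)) = 1. -/
/-!
Write `φ λ = ∫ dμ / (λ + α)`, where `α > m` almost everywhere. For `λ ≥ -m` the integrand is
dominated by `1 / (α - m)`, so dominated convergence makes `φ` continuous on `[-m, ∞)` with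
`φ (-m) = ∫ dμ / (α - m)`, and gives `φ λ → 0` as `λ → ∞`. Since `φ` is strictly decreasing,
the intermediate value theorem yields exactly one `λ > -m` with `φ λ = c` whenever
`0 < c < ∫ dμ / (α - m)`; the house of cards model is `μ` = Lebesgue measure on `(0, 1]`, `m = α 0`.
-/

open MeasureTheory intervalIntegral Filter Set Topology

namespace MeasureTheory

variable {X : Type*} [MeasurableSpace X] {μ : Measure X}

theorem integral_pos_of_ae_pos [NeZero μ] {f : X → ℝ} (hf : ∀ᵐ x ∂μ, 0 < f x)
    (hfi : Integrable f μ) : 0 < ∫ x, f x ∂μ := by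
  rw [integral_pos_iff_support_of_nonneg_ae (hf.mono fun _ hx => hx.le) hfi]
  have hsupp : Function.support f =ᵐ[μ] univ :=
    ae_eq_univ.2 <| measure_mono_null (fun x hx => by simp_all) (ae_iff.1 hf)
  rw [measure_congr hsupp]
  exact Measure.measure_univ_pos.2 (NeZero.ne μ)

end MeasureTheory

lemma norm_one_div_add_le {m a lam : ℝ} (ha : m < a) (hlam : -m ≤ lam) :
    ‖1 / (lam + a)‖ ≤ 1 / (a - m) := by
  rw [Real.norm_of_nonneg (one_div_nonneg.2 (by linarith))]
  exact one_div_le_one_div_of_le (by linarith) (by linarith)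

section ResolventIntegral

variable {X : Type*} [MeasurableSpace X] {μ : Measure X} {α : X → ℝ} {m : ℝ}

lemma aestronglyMeasurable_one_div_add (hα : AEStronglyMeasurable α μ) (lam : ℝ) :
    AEStronglyMeasurable (fun x => 1 / (lam + α x)) μ :=
  ((hα.aemeasurable.const_add lam).const_div 1).aestronglyMeasurable

variable (hα : AEStronglyMeasurable α μ) (hm : ∀ᵐ x ∂μ, m < α x)
  (hint : Integrable (fun x => 1 / (α x - m)) μ)
include hα hm hint

lemma integrable_one_div_add {lam : ℝ} (hlam : -m ≤ lam) :
    Integrable (fun x => 1 / (lam + α x)) μ :=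
  hint.mono' (aestronglyMeasurable_one_div_add hα lam)
    (hm.mono fun _ hx => norm_one_div_add_le hx hlam)

lemma continuousOn_integral_one_div_add :
    ContinuousOn (fun lam => ∫ x, 1 / (lam + α x) ∂μ) (Ici (-m)) :=
  continuousOn_of_dominated (fun lam _ => aestronglyMeasurable_one_div_add hα lam)
    (fun _ hlam => hm.mono fun _ hx => norm_one_div_add_le hx hlam) hint
    (hm.mono fun x hx => continuousOn_const.div (continuousOn_id.add continuousOn_const)
      fun lam hlam => by simp only [mem_Ici] at hlam; linarith)

lemma tendsto_integral_one_div_add_atTop :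
    Tendsto (fun lam => ∫ x, 1 / (lam + α x) ∂μ) atTop (𝓝 0) := by
  have hlim := tendsto_integral_filter_of_dominated_convergence (f := fun _ => 0) _
    (Eventually.of_forall (aestronglyMeasurable_one_div_add hα))
    ((eventually_ge_atTop (-m)).mono fun _ hlam => hm.mono fun _ hx => norm_one_div_add_le hx hlam)
    hint (ae_of_all _ fun x =>
      tendsto_const_nhds.div_atTop (tendsto_atTop_add_const_right _ (α x) tendsto_id))
  simpa only [integral_zero] using hlim

lemma strictAntiOn_integral_one_div_add [NeZero μ] :
    StrictAntiOn (fun lam => ∫ x, 1 / (lam + α x) ∂μ) (Ici (-m)) := by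
  intro l hl l' hl' hll'
  simp only [mem_Ici] at hl hl'
  rw [← sub_pos, ← integral_sub (integrable_one_div_add hα hm hint hl)
    (integrable_one_div_add hα hm hint hl')]
  refine integral_pos_of_ae_pos (hm.mono fun x hx => ?_)
    ((integrable_one_div_add hα hm hint hl).sub (integrable_one_div_add hα hm hint hl'))
  rw [sub_pos]
  exact one_div_lt_one_div_of_lt (by linarith) (by linarith)

theorem existsUnique_integral_one_div_add_eq {c : ℝ} (hc : 0 < c)
    (hc_lt : c < ∫ x, 1 / (α x - m) ∂μ) :
    ∃! lam, -m < lam ∧ ∫ x, 1 / (lam + α x) ∂μ = c := by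
  have : NeZero μ := ⟨by rintro rfl; simp at hc_lt; linarith⟩
  simp_rw [← neg_add_eq_sub] at hc_lt
  obtain ⟨L, hLc, hmL⟩ := (((tendsto_integral_one_div_add_atTop hα hm hint).eventually
    (gt_mem_nhds hc)).and (eventually_gt_atTop (-m))).exists
  obtain ⟨lam, hlam, hlam_eq⟩ := intermediate_value_Icc' hmL.le
    ((continuousOn_integral_one_div_add hα hm hint).mono Icc_subset_Ici_self) ⟨hLc.le, hc_lt.le⟩
  have hlam_ne : -m ≠ lam := by rintro rfl; exact hc_lt.ne' hlam_eq
  refine ⟨lam, ⟨lt_of_le_of_ne hlam.1 hlam_ne, hlam_eq⟩, fun lam' ⟨hlam', hlam'_eq⟩ => ?_⟩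
  exact (strictAntiOn_integral_one_div_add hα hm hint).injOn hlam'.le hlam.1
    (hlam'_eq.trans hlam_eq.symm)

end ResolventIntegral

/-- Existence and uniqueness of the Malthusian eigenvalue for the house of cards
model: there is a unique `λ > −α(0)` with `∫₀¹ dx/(λ + α(x)) = 1`. -/
theorem malthusian_eigenvalue_exists_unique
    (α : ℝ → ℝ) (hcont : ContinuousOn α (Set.Icc 0 1))
    (hpos : ∀ x ∈ Set.Ioc (0 : ℝ) 1, α 0 < α x)
    (hint : IntegrableOn (fun x => 1 / (α x - α 0)) (Set.Icc 0 1))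
    (hbig : 1 < ∫ x in (0:ℝ)..1, 1 / (α x - α 0)) :
    ∃! lam : ℝ, -α 0 < lam ∧ ∫ x in (0:ℝ)..1, 1 / (lam + α x) = 1 := by
  simp only [integral_of_le zero_le_one] at hbig ⊢
  exact existsUnique_integral_one_div_add_eq
    ((hcont.mono Ioc_subset_Icc_self).aestronglyMeasurable measurableSet_Ioc)
    (ae_restrict_of_forall_mem measurableSet_Ioc hpos) (hint.mono_set Ioc_subset_Icc_self)
    one_pos hbig
end

section
/- Let α : [0,1] → ℝ be continuous and λ ∈ ℝ with λ + α(x) > 0 for all x ∈ [0,1] and ∫₀¹ dx/(λ + α(x)) = 1. Define the operator A on integrable f : [0,1] → ℝ by (Af)(x) = ∫₀¹ f(u) du − α(x) f(x), and the measure γ(dx) = dx/(λ + α(x)). Then γ is a left eigenmeasure of A with eigenvalue λ: for every bounded measurable f, ∫₀¹ (Af)(x)/(λ + α(x)) dx = λ·∫₀¹ f(x)/(λ + α(x)) dx. -/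
open MeasureTheory

/-!
Writing `w = 1 / (λ + α)`, the identity `α w = 1 - λ w` turns `(∫ f - α f) w` into
`(∫ f) w - f + λ f w`. Integrating against a measure for which `∫ w = 1`, the first two
terms cancel and only `λ ∫ f w` survives.
-/

theorem integral_sub_mul_div_eq_mul_integral_div {X : Type*} [MeasurableSpace X]
    {μ : Measure X} {α f : X → ℝ} {lam : ℝ}
    (hne : ∀ᵐ x ∂μ, lam + α x ≠ 0) (hnorm : ∫ x, 1 / (lam + α x) ∂μ = 1)
    (hf : Integrable f μ) (hfw : Integrable (fun x => f x / (lam + α x)) μ) :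
    ∫ x, ((∫ u, f u ∂μ) - α x * f x) / (lam + α x) ∂μ =
      lam * ∫ x, f x / (lam + α x) ∂μ := by
  set I := ∫ u, f u ∂μ
  have hw : Integrable (fun x => 1 / (lam + α x)) μ :=
    Integrable.of_integral_ne_zero (by rw [hnorm]; exact one_ne_zero)
  have hpt : ∀ᵐ x ∂μ, (I - α x * f x) / (lam + α x) =
      I * (1 / (lam + α x)) - (f x - lam * (f x / (lam + α x))) := by
    filter_upwards [hne] with x hx
    field_simp
    ring
  have hg : Integrable (fun x => f x - lam * (f x / (lam + α x))) μ :=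
    hf.sub (hfw.const_mul lam)
  calc ∫ x, (I - α x * f x) / (lam + α x) ∂μ
      = ∫ x, I * (1 / (lam + α x)) - (f x - lam * (f x / (lam + α x))) ∂μ :=
        integral_congr_ae hpt
    _ = I * 1 - (I - lam * ∫ x, f x / (lam + α x) ∂μ) := by
        rw [integral_sub (hw.const_mul I) hg, integral_const_mul,
          hnorm, integral_sub hf (hfw.const_mul lam), integral_const_mul]
    _ = lam * ∫ x, f x / (lam + α x) ∂μ := by ring

theorem house_of_cards_left_eigenmeasure_general
    (α : ℝ → ℝ) (lam : ℝ)
    (hpos : ∀ x ∈ Set.Icc (0:ℝ) 1, 0 < lam + α x)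
    (hnorm : ∫ x in (0:ℝ)..1, 1 / (lam + α x) = 1)
    (f : ℝ → ℝ) (hf : Measurable f) (hbdd : ∃ C, ∀ x, |f x| ≤ C) :
    ∫ x in (0:ℝ)..1, ((∫ u in (0:ℝ)..1, f u) - α x * f x) / (lam + α x) =
      lam * ∫ x in (0:ℝ)..1, f x / (lam + α x) := by
  obtain ⟨C, hC⟩ := hbdd
  simp only [intervalIntegral.integral_of_le zero_le_one] at hnorm ⊢
  have hne : ∀ᵐ x ∂volume.restrict (Set.Ioc (0:ℝ) 1), lam + α x ≠ 0 :=
    (ae_restrict_iff' measurableSet_Ioc).2 <|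
      ae_of_all _ fun x hx => (hpos x (Set.Ioc_subset_Icc_self hx)).ne'
  have hfC : ∀ᵐ x ∂volume.restrict (Set.Ioc (0:ℝ) 1), ‖f x‖ ≤ C := ae_of_all _ hC
  have hw : IntegrableOn (fun x => 1 / (lam + α x)) (Set.Ioc 0 1) :=
    Integrable.of_integral_ne_zero (by rw [hnorm]; exact one_ne_zero)
  have hfw : IntegrableOn (fun x => f x / (lam + α x)) (Set.Ioc 0 1) := by
    rw [IntegrableOn]
    simpa only [mul_one_div] using hw.bdd_mul hf.aestronglyMeasurable hfC
  exact integral_sub_mul_div_eq_mul_integral_div hne hnorm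
    (Integrable.of_bound hf.aestronglyMeasurable C hfC) hfw

/-- The measure `γ(dx) = dx/(λ + α(x))` is a left eigenmeasure of the house of
cards generator `A f(x) = ∫₀¹ f − α(x) f(x)` with eigenvalue `λ`. -/
theorem house_of_cards_left_eigenmeasure
    (α : ℝ → ℝ) (hcont : ContinuousOn α (Set.Icc 0 1)) (lam : ℝ)
    (hpos : ∀ x ∈ Set.Icc (0:ℝ) 1, 0 < lam + α x)
    (hnorm : ∫ x in (0:ℝ)..1, 1 / (lam + α x) = 1)
    (f : ℝ → ℝ) (hf : Measurable f) (hbdd : ∃ C, ∀ x, |f x| ≤ C) :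
    ∫ x in (0:ℝ)..1, ((∫ u in (0:ℝ)..1, f u) - α x * f x) / (lam + α x) =
      lam * ∫ x in (0:ℝ)..1, f x / (lam + α x) :=
  house_of_cards_left_eigenmeasure_general α lam hpos hnorm f hf hbdd
end

section
/- Let σ > 0, Z a standard Gaussian, and let F : ℝ → ℝ be bounded and continuously differentiable with bounded derivative. Define P_t F(x) = E[F(e^{−t}x + σ√(1−e^{−2t})Z)] for t ≥ 0 and H(x) = −∫₀^∞ (P_t F(x) − E[F(σZ)]) dt. Then H is differentiable and ‖H'‖_∞ ≤ ‖F'‖_∞. -/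
/-!
Differentiating under the expectation gives `(P_t F)' = e^{-t} P_t (F')`, so
`|(P_t F)'| ≤ C e^{-t}`, and differentiating under the `t`-integral then gives
`|H'| ≤ C ∫₀^∞ e^{-t} dt = C`. The second differentiation needs `t ↦ P_t F(x) - E[F(σZ)]`
to be integrable on `(0, ∞)`: since `F` is `C`-Lipschitz and
`|σ √(1 - e^{-2t}) - σ| ≤ |σ| e^{-t}`, this difference is at most
`C (|x| + |σ| E|Z|) e^{-t}`, and `E|Z| < ∞` for Gaussian `Z`.
-/

open MeasureTheory ProbabilityTheory Real Set Filter
open scoped NNReal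

lemma integrable_of_map_eq_gaussianReal {Ω : Type*} [MeasurableSpace Ω] {P : Measure Ω}
    {Z : Ω → ℝ} (hZ : Measurable Z) (hZP : P.map Z = gaussianReal 0 1) : Integrable Z P :=
  (hZP ▸ IsGaussian.integrable_id : Integrable id (P.map Z)).comp_measurable hZ

lemma lipschitzWith_of_abs_deriv_le {F : ℝ → ℝ} {C : ℝ} (hF : Differentiable ℝ F)
    (hF' : ∀ x, |deriv F x| ≤ C) : LipschitzWith C.toNNReal F :=
  lipschitzWith_of_nnnorm_deriv_le hF fun x => by
    rw [← NNReal.coe_le_coe, coe_nnnorm, Real.norm_eq_abs]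
    exact (hF' x).trans (le_coe_toNNReal C)

lemma abs_mul_sqrt_one_sub_exp_sub_self_le (σ : ℝ) {t : ℝ} (ht : 0 ≤ t) :
    |σ * √(1 - exp (-2 * t)) - σ| ≤ |σ| * exp (-t) := by
  have hu : exp (-2 * t) ≤ exp (-t) := exp_le_exp.2 (by linarith)
  have hu1 : exp (-2 * t) ≤ 1 := exp_le_one_iff.2 (by linarith)
  have hsqrt : 1 - exp (-2 * t) ≤ √(1 - exp (-2 * t)) :=
    le_sqrt_of_sq_le (by nlinarith [exp_pos (-2 * t)])
  have hsqrt1 : √(1 - exp (-2 * t)) ≤ 1 := sqrt_le_one.2 (by linarith [exp_pos (-2 * t)])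
  rw [← mul_sub_one, abs_mul, abs_of_nonpos (a := √(1 - exp (-2 * t)) - 1) (by linarith)]
  exact mul_le_mul_of_nonneg_left (by linarith) (abs_nonneg σ)

noncomputable def ouSemigroup {Ω : Type*} [MeasurableSpace Ω] (P : Measure Ω) (Z : Ω → ℝ)
    (σ : ℝ) (F : ℝ → ℝ) (t x : ℝ) : ℝ :=
  ∫ ω, F (exp (-t) * x + σ * √(1 - exp (-2 * t)) * Z ω) ∂P

section OrnsteinUhlenbeck

variable {Ω : Type*} [MeasurableSpace Ω] {P : Measure Ω} [IsProbabilityMeasure P] {Z : Ω → ℝ}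
  {σ : ℝ} {G : ℝ → ℝ} {K : ℝ}

lemma integrable_comp_add_mul (hZ : Measurable Z) (hG : Continuous G) (hGK : ∀ x, |G x| ≤ K)
    (p q : ℝ) : Integrable (fun ω => G (p + q * Z ω)) P :=
  .of_bound (by fun_prop) K (.of_forall fun _ => (norm_eq_abs _).trans_le (hGK _))

lemma abs_ouSemigroup_le (hGK : ∀ x, |G x| ≤ K) (t x : ℝ) : |ouSemigroup P Z σ G t x| ≤ K := by
  simpa [ouSemigroup] using norm_integral_le_of_norm_le_const (μ := P)
    (.of_forall fun _ => (norm_eq_abs _).trans_le (hGK _))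

lemma abs_exp_mul_ouSemigroup_le (hGK : ∀ x, |G x| ≤ K) (t x : ℝ) :
    |exp (-t) * ouSemigroup P Z σ G t x| ≤ K * exp (-t) := by
  rw [abs_mul, abs_of_pos (exp_pos _), mul_comm]
  exact mul_le_mul_of_nonneg_right (abs_ouSemigroup_le hGK t x) (exp_pos _).le

lemma continuous_ouSemigroup_time (hZ : Measurable Z) (hG : Continuous G)
    (hGK : ∀ x, |G x| ≤ K) (x : ℝ) : Continuous fun t => ouSemigroup P Z σ G t x :=
  continuous_of_dominated (bound := fun _ => K) (fun _ => by fun_prop)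
    (fun _ => .of_forall fun _ => (norm_eq_abs _).trans_le (hGK _)) (integrable_const K)
    (.of_forall fun _ => by fun_prop)

lemma hasDerivAt_ouSemigroup {F : ℝ → ℝ} {C₀ C : ℝ} (hZ : Measurable Z) (hF : ContDiff ℝ 1 F)
    (hFb : ∀ x, |F x| ≤ C₀) (hF'b : ∀ x, |deriv F x| ≤ C) (t x₀ : ℝ) :
    HasDerivAt (ouSemigroup P Z σ F t) (exp (-t) * ouSemigroup P Z σ (deriv F) t x₀) x₀ := by
  have hF' : Continuous (deriv F) := hF.continuous_deriv le_rfl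
  have hdiff : ∀ x ω, HasDerivAt (fun y => F (exp (-t) * y + σ * √(1 - exp (-2 * t)) * Z ω))
      (exp (-t) * deriv F (exp (-t) * x + σ * √(1 - exp (-2 * t)) * Z ω)) x := fun x ω => by
    have hlin := ((hasDerivAt_id x).const_mul (exp (-t))).add_const
      (σ * √(1 - exp (-2 * t)) * Z ω)
    exact ((hF.differentiable one_ne_zero _).hasDerivAt.comp x hlin).congr_deriv
      (by rw [mul_one]; exact mul_comm _ _)
  have h := hasDerivAt_integral_of_dominated_loc_of_deriv_le (μ := P) (x₀ := x₀)
    (bound := fun _ => exp (-t) * C)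
    univ_mem (.of_forall fun _ => (integrable_comp_add_mul hZ hF.continuous hFb _ _).1)
    (integrable_comp_add_mul hZ hF.continuous hFb _ _)
    ((integrable_comp_add_mul hZ hF' hF'b _ _).1.const_mul _)
    (.of_forall fun ω x _ => by
      rw [norm_mul, norm_of_nonneg (exp_pos _).le]
      exact mul_le_mul_of_nonneg_left (hF'b _) (exp_pos _).le)
    (integrable_const _) (.of_forall fun ω x _ => hdiff x ω)
  rw [ouSemigroup, ← integral_const_mul]
  exact h.2

lemma abs_ouSemigroup_sub_integral_le {F : ℝ → ℝ} {C₀ : ℝ} {L : ℝ≥0} (hZ : Measurable Z)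
    (hZi : Integrable Z P) (hFL : LipschitzWith L F) (hFb : ∀ x, |F x| ≤ C₀) {t : ℝ}
    (ht : 0 ≤ t) (x : ℝ) :
    |ouSemigroup P Z σ F t x - ∫ ω, F (σ * Z ω) ∂P|
      ≤ L * (|x| + |σ| * ∫ ω, |Z ω| ∂P) * exp (-t) := by
  set a := σ * √(1 - exp (-2 * t))
  have ha : |a - σ| ≤ |σ| * exp (-t) := abs_mul_sqrt_one_sub_exp_sub_self_le σ ht
  have hpt : ∀ ω, |F (exp (-t) * x + a * Z ω) - F (σ * Z ω)|
      ≤ L * (|x| + |σ| * |Z ω|) * exp (-t) := fun ω =>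
    calc _ ≤ L * |exp (-t) * x + (a - σ) * Z ω| := by
          simpa only [dist_eq, add_sub_assoc, sub_mul] using
            hFL.dist_le_mul (exp (-t) * x + a * Z ω) (σ * Z ω)
      _ ≤ L * (exp (-t) * |x| + |σ| * exp (-t) * |Z ω|) := by
          grw [abs_add_le, abs_mul, abs_mul, abs_of_pos (exp_pos _), ha]
      _ = L * (|x| + |σ| * |Z ω|) * exp (-t) := by ring
  have hFi := integrable_comp_add_mul (P := P) hZ hFL.continuous hFb
  have hbound : Integrable (fun ω => L * (|x| + |σ| * |Z ω|) * exp (-t)) P :=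
    (((integrable_const _).add (hZi.abs.const_mul _)).const_mul _).mul_const _
  rw [ouSemigroup, ← integral_sub (hFi _ _) (by simpa using hFi 0 σ)]
  calc |∫ ω, F (exp (-t) * x + a * Z ω) - F (σ * Z ω) ∂P|
    _ ≤ ∫ ω, L * (|x| + |σ| * |Z ω|) * exp (-t) ∂P :=
        norm_integral_le_of_norm_le hbound (.of_forall fun ω => (norm_eq_abs _).trans_le (hpt ω))
    _ = L * (|x| + |σ| * ∫ ω, |Z ω| ∂P) * exp (-t) := by
        rw [integral_mul_const, integral_const_mul,
          integral_add (integrable_const _) (hZi.abs.const_mul _), integral_const_mul]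
        simp

lemma hasDerivAt_integral_ouSemigroup_sub {F : ℝ → ℝ} {C₀ C : ℝ} (hZ : Measurable Z)
    (hZi : Integrable Z P) (hF : ContDiff ℝ 1 F) (hFb : ∀ x, |F x| ≤ C₀)
    (hF'b : ∀ x, |deriv F x| ≤ C) (x₀ : ℝ) :
    HasDerivAt (fun x => ∫ t in Ioi 0, (ouSemigroup P Z σ F t x - ∫ ω, F (σ * Z ω) ∂P))
      (∫ t in Ioi 0, exp (-t) * ouSemigroup P Z σ (deriv F) t x₀) x₀ := by
  have hF' : Continuous (deriv F) := hF.continuous_deriv le_rfl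
  have hcont : ∀ x, Continuous fun t => ouSemigroup P Z σ F t x - ∫ ω, F (σ * Z ω) ∂P :=
    fun x => (continuous_ouSemigroup_time hZ hF.continuous hFb x).sub continuous_const
  have hLip := lipschitzWith_of_abs_deriv_le (hF.differentiable one_ne_zero) hF'b
  have hint : IntegrableOn (fun t => ouSemigroup P Z σ F t x₀ - ∫ ω, F (σ * Z ω) ∂P) (Ioi 0) :=
    ((integrableOn_exp_neg_Ioi 0).const_mul _).mono' (hcont x₀).aestronglyMeasurable
      ((ae_restrict_iff' measurableSet_Ioi).2 (.of_forall fun t ht =>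
        abs_ouSemigroup_sub_integral_le hZ hZi hLip hFb ht.le x₀))
  exact (hasDerivAt_integral_of_dominated_loc_of_deriv_le (x₀ := x₀)
    (bound := fun t => C * exp (-t)) univ_mem
    (.of_forall fun x => (hcont x).aestronglyMeasurable) hint
    ((continuous_exp.comp continuous_neg).mul
      (continuous_ouSemigroup_time hZ hF' hF'b x₀)).aestronglyMeasurable
    (.of_forall fun t x _ => abs_exp_mul_ouSemigroup_le hF'b t x)
    ((integrableOn_exp_neg_Ioi 0).const_mul C)
    (.of_forall fun t x _ => (hasDerivAt_ouSemigroup hZ hF hFb hF'b t x).sub_const _)).2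

lemma abs_integral_exp_mul_ouSemigroup_le (hGK : ∀ x, |G x| ≤ K) (x : ℝ) :
    |∫ t in Ioi 0, exp (-t) * ouSemigroup P Z σ G t x| ≤ K :=
  calc |∫ t in Ioi 0, exp (-t) * ouSemigroup P Z σ G t x|
    _ ≤ ∫ t in Ioi 0, K * exp (-t) :=
        norm_integral_le_of_norm_le (f := fun t => exp (-t) * ouSemigroup P Z σ G t x)
          ((integrableOn_exp_neg_Ioi 0).const_mul K)
          (.of_forall fun t => abs_exp_mul_ouSemigroup_le hGK t x)
    _ = K := by rw [integral_const_mul, integral_exp_neg_Ioi_zero, mul_one]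

end OrnsteinUhlenbeck

theorem ou_poisson_solution_deriv_bound_general
    {Ω : Type*} [MeasurableSpace Ω] (P : Measure Ω) [IsProbabilityMeasure P]
    (σ : ℝ) (Z : Ω → ℝ) (hZmeas : Measurable Z)
    (hZ : Measure.map Z P = gaussianReal 0 1)
    (F : ℝ → ℝ) (hF : ContDiff ℝ 1 F)
    (C₀ C : ℝ) (hFbdd : ∀ x, |F x| ≤ C₀) (hF'bdd : ∀ x, |deriv F x| ≤ C)
    (H : ℝ → ℝ)
    (hH : ∀ x, H x = -∫ t in Set.Ioi (0:ℝ),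
        ((∫ ω, F (Real.exp (-t) * x
            + σ * Real.sqrt (1 - Real.exp (-2 * t)) * Z ω) ∂P)
          - ∫ ω, F (σ * Z ω) ∂P)) :
    Differentiable ℝ H ∧ ∀ x, |deriv H x| ≤ C := by
  have hH' : ∀ x, HasDerivAt H (-∫ t in Ioi 0, exp (-t) * ouSemigroup P Z σ (deriv F) t x) x :=
    fun x => funext hH ▸ (hasDerivAt_integral_ouSemigroup_sub hZmeas
      (integrable_of_map_eq_gaussianReal hZmeas hZ) hF hFbdd hF'bdd x).neg
  refine ⟨fun x => (hH' x).differentiableAt, fun x => ?_⟩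
  rw [(hH' x).deriv, abs_neg]
  exact abs_integral_exp_mul_ouSemigroup_le hF'bdd x

/-- The candidate solution `H(x) = −∫₀^∞ (P_t F(x) − E[F(σZ)]) dt` of the
Ornstein–Uhlenbeck Poisson equation is differentiable with `‖H'‖_∞ ≤ ‖F'‖_∞`. -/
theorem ou_poisson_solution_deriv_bound
    {Ω : Type*} [MeasurableSpace Ω] (P : Measure Ω) [IsProbabilityMeasure P]
    (σ : ℝ) (hσ : 0 < σ) (Z : Ω → ℝ) (hZmeas : Measurable Z)
    (hZ : Measure.map Z P = gaussianReal 0 1)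
    (F : ℝ → ℝ) (hF : ContDiff ℝ 1 F)
    (C₀ C : ℝ) (hFbdd : ∀ x, |F x| ≤ C₀) (hF'bdd : ∀ x, |deriv F x| ≤ C)
    (H : ℝ → ℝ)
    (hH : ∀ x, H x = -∫ t in Set.Ioi (0:ℝ),
        ((∫ ω, F (Real.exp (-t) * x
            + σ * Real.sqrt (1 - Real.exp (-2 * t)) * Z ω) ∂P)
          - ∫ ω, F (σ * Z ω) ∂P)) :
    Differentiable ℝ H ∧ ∀ x, |deriv H x| ≤ C :=
  ou_poisson_solution_deriv_bound_general P σ Z hZmeas hZ F hF C₀ C hFbdd hF'bdd H hH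
end
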